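/- Let s be a real number with s < 0, define B(λ) = [[√(−s), −λ/√(−s)],[0, 1/√(−s)]] and w(λ) = [[0, λ],[−1/λ, 0]] for λ ∈ ℂ∖{0}. Then for every λ ≠ 0: C(w)(λ)⁻¹·w(λ) = −I, and C(B)(λ)⁻¹·C(w)(λ)⁻¹·w(λ)·B(λ) = [[s, λ],[−1/λ, 0]]. -/

import Mathlib

open Matrix Complex

noncomputable section

abbrev M2 := Matrix (Fin 2) (Fin 2) ℂ

/-- `D = diag(1,-1)`. -/
def Dmat : M2 := !![1, 0; 0, -1]

/-- The involution `C(γ)(λ) = D·((conj(γ(1/conj λ)))ᵀ)⁻¹·D`. -/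
def Cinv (γ : ℂ → M2) (l : ℂ) : M2 :=
  Dmat * (((γ (1 / (starRingEnd ℂ l))).map (starRingEnd ℂ))ᵀ)⁻¹ * Dmat

/-- `B(λ) = [[√(−s), −λ/√(−s)],[0, 1/√(−s)]]`. -/
def Bfun (s : ℝ) (lam : ℂ) : M2 :=
  !![(Real.sqrt (-s) : ℂ), -lam / (Real.sqrt (-s) : ℂ); 0, 1 / (Real.sqrt (-s) : ℂ)]

/-- `w(λ) = [[0,λ],[−1/λ,0]]`. -/
def wmat (lam : ℂ) : M2 := !![0, lam; -1/lam, 0]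

/-! Since `D² = 1`, inverting `C(γ)(λ)` just undoes the inverse inside it:
`C(γ)(λ)⁻¹ = D · γ(1/λ̄)ᴴ · D` whenever `γ(1/λ̄)` is invertible. Both `w` and `B` have
determinant `1`, so this gives `C(w)(λ)⁻¹ = w(λ)`, whence the first identity from `w(λ)² = −I`,
and `C(B)(λ)⁻¹ = [[a, 0], [1/(λa), 1/a]]` with `a = √(−s)`; its product with `−B(λ)` is
`[[−a², λ], [−1/λ, 0]]`, and `−a² = s`. -/

theorem Dmat_mul_self : Dmat * Dmat = 1 := by
  simp [Dmat, Matrix.one_fin_two]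

theorem Cinv_eq (γ : ℂ → M2) (l : ℂ) :
    Cinv γ l = Dmat * (γ (1 / starRingEnd ℂ l))ᴴ⁻¹ * Dmat := by
  rw [Cinv, ← Matrix.transpose_map, ← Complex.star_def]
  rfl

theorem inv_Cinv {γ : ℂ → M2} {l : ℂ} (h : IsUnit (γ (1 / starRingEnd ℂ l)).det) :
    (Cinv γ l)⁻¹ = Dmat * (γ (1 / starRingEnd ℂ l))ᴴ * Dmat := by
  rw [Cinv_eq]
  set A := γ (1 / starRingEnd ℂ l)
  have hA : IsUnit Aᴴ.det := by simpa [Matrix.det_conjTranspose] using h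
  refine Matrix.inv_eq_left_inv ?_
  calc Dmat * Aᴴ * Dmat * (Dmat * Aᴴ⁻¹ * Dmat) = Dmat * (Aᴴ * (Dmat * Dmat) * Aᴴ⁻¹) * Dmat := by
        simp only [Matrix.mul_assoc]
    _ = 1 := by rw [Dmat_mul_self, Matrix.mul_one, Matrix.mul_nonsing_inv _ hA,
        Matrix.mul_one, Dmat_mul_self]

theorem Dmat_mul_conjTranspose_mul_Dmat (p q r t : ℂ) :
    Dmat * (!![p, q; r, t])ᴴ * Dmat = !![star p, -star r; -star q, star t] := by
  have : (!![p, q; r, t])ᴴ = !![star p, star r; star q, star t] := by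
    ext i j; fin_cases i <;> fin_cases j <;> rfl
  rw [this]
  simp [Dmat]

theorem det_wmat {l : ℂ} (hl : l ≠ 0) : (wmat l).det = 1 := by
  simp [wmat, Matrix.det_fin_two, mul_div_cancel₀ _ hl]

theorem wmat_mul_self {l : ℂ} (hl : l ≠ 0) : wmat l * wmat l = -1 := by
  simp [wmat, Matrix.one_fin_two, neg_div, hl]

theorem inv_Cinv_wmat {l : ℂ} (hl : l ≠ 0) : (Cinv wmat l)⁻¹ = wmat l := by
  have hl' : 1 / starRingEnd ℂ l ≠ 0 := by simpa using hl
  rw [inv_Cinv (by simp only [det_wmat hl', isUnit_one]), wmat, wmat,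
    Dmat_mul_conjTranspose_mul_Dmat]
  simp [neg_div]

theorem ofReal_sqrt_neg_ne_zero {s : ℝ} (hs : s < 0) : (Real.sqrt (-s) : ℂ) ≠ 0 :=
  Complex.ofReal_ne_zero.2 (Real.sqrt_pos.2 (neg_pos.2 hs)).ne'

theorem ofReal_sqrt_neg_mul_self {s : ℝ} (hs : s ≤ 0) :
    (Real.sqrt (-s) : ℂ) * Real.sqrt (-s) = -s := by
  rw [← Complex.ofReal_mul, Real.mul_self_sqrt (neg_nonneg.2 hs), Complex.ofReal_neg]

theorem det_Bfun {s : ℝ} (hs : s < 0) (μ : ℂ) : (Bfun s μ).det = 1 := by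
  simp [Bfun, Matrix.det_fin_two, ofReal_sqrt_neg_ne_zero hs]

theorem inv_Cinv_Bfun {s : ℝ} (hs : s < 0) (l : ℂ) :
    (Cinv (Bfun s) l)⁻¹ = !![(Real.sqrt (-s) : ℂ), 0;
      1 / (l * Real.sqrt (-s)), 1 / (Real.sqrt (-s) : ℂ)] := by
  rw [inv_Cinv (by simp only [det_Bfun hs, isUnit_one]), Bfun, Dmat_mul_conjTranspose_mul_Dmat]
  simp [div_eq_mul_inv, mul_comm]

theorem CB_inv_B_negative (s : ℝ) (hs : s < 0) :
    ∀ lam : ℂ, lam ≠ 0 →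
      (Cinv wmat lam)⁻¹ * wmat lam = -(1 : M2) ∧
      (Cinv (Bfun s) lam)⁻¹ * (Cinv wmat lam)⁻¹ * wmat lam * Bfun s lam
        = !![(s : ℂ), lam; -1/lam, 0] := by
  intro lam hl
  have hw : (Cinv wmat lam)⁻¹ * wmat lam = -1 := by rw [inv_Cinv_wmat hl, wmat_mul_self hl]
  refine ⟨hw, ?_⟩
  have ha := ofReal_sqrt_neg_ne_zero hs
  have hs' : (s : ℂ) = -(Real.sqrt (-s) * Real.sqrt (-s)) := by
    rw [ofReal_sqrt_neg_mul_self hs.le, neg_neg]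
  rw [Matrix.mul_assoc _ (Cinv wmat lam)⁻¹, hw, inv_Cinv_Bfun hs, Bfun, mul_neg_one,
    Matrix.neg_mul, Matrix.mul_fin_two, hs']
  ext i j
  fin_cases i <;> fin_cases j <;> simp <;> field_simp; ring
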